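/- arXiv:2212.07089 — 7 statements merged into one kernel-verified Lean document; each statement's English description precedes it below -/
import Mathlib

section
/- Let p be a prime and 𝒞 ⊆ 𝔽_p^{2n} a linear code. Define the Construction A lattice Λ(𝒞) = {v/√p : v ∈ ℤ^{2n}, v mod p ∈ 𝒞}, equipped with the bilinear form λ ⊙ λ' = λ η λ'^T with η = [[0,I_n],[I_n,0]]. Then the dual lattice Λ(𝒞)^* (with respect to ⊙) equals Λ(𝒞^⊥), where 𝒞^⊥ is the dual code with respect to ⊙ mod p. In particular, Λ(𝒞) is self-dual if and only if 𝒞 is self-dual. -/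
/-!
For integer vectors the real form
`(w/√p) ⊙ (v/√p)` is the integer `w ⊙ v` divided by `p`, so it is an integer exactly when
`w ⊙ v ≡ 0 mod p`; as every codeword lifts to an integer vector, a point `w/√p` lies in
`Λ(𝒞)^*` iff `w mod p ∈ 𝒞^⊥`. Every point of `Λ(𝒞)^*` is of this form, because `Λ(𝒞)` contains
`p e_j / √p = √p e_j` (these vectors reduce to `0 ∈ 𝒞`), and pairing with them shows that
`√p y` is integral. Self-duality follows since `𝒞 ↦ Λ(𝒞)` is injective.
-/

/-- The inner product on `𝔽_p^{2n}` with respect to the off-diagonal Lorentzian metric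
`η = [[0,I_n],[I_n,0]]`. -/
def etaDot (p n : ℕ) (c c' : Fin n ⊕ Fin n → ZMod p) : ZMod p :=
  ∑ i : Fin n, (c (Sum.inl i) * c' (Sum.inr i) + c (Sum.inr i) * c' (Sum.inl i))

/-- The dual code of `𝒞` with respect to the form `⊙` mod `p`. -/
def dualCode (p n : ℕ) (𝒞 : Set (Fin n ⊕ Fin n → ZMod p)) :
    Set (Fin n ⊕ Fin n → ZMod p) :=
  {c' | ∀ c ∈ 𝒞, etaDot p n c' c = 0}

/-- The Construction A lattice `Λ(𝒞) = {v/√p : v ∈ ℤ^{2n}, v mod p ∈ 𝒞}`. -/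
def latticeA (p n : ℕ) (𝒞 : Set (Fin n ⊕ Fin n → ZMod p)) :
    Set (Fin n ⊕ Fin n → ℝ) :=
  {x | ∃ v : Fin n ⊕ Fin n → ℤ, (fun i => ((v i : ZMod p))) ∈ 𝒞 ∧
        x = fun i => (v i : ℝ) / Real.sqrt p}

/-- The real bilinear form `λ ⊙ λ' = λ η λ'^T` with `η = [[0,I_n],[I_n,0]]`. -/
def etaDotR (n : ℕ) (x y : Fin n ⊕ Fin n → ℝ) : ℝ :=
  ∑ i : Fin n, (x (Sum.inl i) * y (Sum.inr i) + x (Sum.inr i) * y (Sum.inl i))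

/-- The dual lattice `Λ^* = {y : y ⊙ x ∈ ℤ for all x ∈ Λ}`. -/
def dualLattice (n : ℕ) (Λ : Set (Fin n ⊕ Fin n → ℝ)) :
    Set (Fin n ⊕ Fin n → ℝ) :=
  {y | ∀ x ∈ Λ, ∃ m : ℤ, etaDotR n y x = m}

open Matrix

lemma etaDot_eq_dotProduct (p n : ℕ) (c c' : Fin n ⊕ Fin n → ZMod p) :
    etaDot p n c c' = c ⬝ᵥ (c' ∘ Sum.swap) := by
  simp [etaDot, dotProduct, Fintype.sum_sum_type, Finset.sum_add_distrib]

lemma etaDotR_eq_dotProduct (n : ℕ) (x y : Fin n ⊕ Fin n → ℝ) :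
    etaDotR n x y = x ⬝ᵥ (y ∘ Sum.swap) := by
  simp [etaDotR, dotProduct, Fintype.sum_sum_type, Finset.sum_add_distrib]

section ConstructionA

variable {p n : ℕ}

lemma etaDot_intCast (w v : Fin n ⊕ Fin n → ℤ) :
    etaDot p n (fun i => (w i : ZMod p)) (fun i => (v i : ZMod p))
      = ((w ⬝ᵥ (v ∘ Sum.swap) : ℤ) : ZMod p) := by
  rw [etaDot_eq_dotProduct]
  exact ((Int.castRingHom (ZMod p)).map_dotProduct _ _).symm

lemma etaDotR_div_sqrt (w v : Fin n ⊕ Fin n → ℤ) :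
    etaDotR n (fun i => (w i : ℝ) / √p) (fun i => (v i : ℝ) / √p)
      = ((w ⬝ᵥ (v ∘ Sum.swap) : ℤ) : ℝ) / p := by
  have hsq : √(p : ℝ) * √p = p := Real.mul_self_sqrt p.cast_nonneg
  simp only [etaDotR_eq_dotProduct, dotProduct, Function.comp_apply, Int.cast_sum,
    Int.cast_mul, Finset.sum_div]
  refine Finset.sum_congr rfl fun i _ => ?_
  rw [div_mul_div_comm, hsq]

lemma exists_intCast_eq_div_iff (hp : p ≠ 0) (z : ℤ) :
    (∃ m : ℤ, (z : ℝ) / p = m) ↔ (z : ZMod p) = 0 := by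
  have hp' : (p : ℝ) ≠ 0 := Nat.cast_ne_zero.2 hp
  rw [ZMod.intCast_zmod_eq_zero_iff_dvd]
  refine exists_congr fun m => ?_
  rw [div_eq_iff hp', mul_comm]
  norm_cast

lemma exists_intCast_lift (c : Fin n ⊕ Fin n → ZMod p) :
    ∃ v : Fin n ⊕ Fin n → ℤ, (fun i => (v i : ZMod p)) = c :=
  ZMod.intCast_surjective.comp_left c

variable {𝒞 : Set (Fin n ⊕ Fin n → ZMod p)}

lemma div_sqrt_mem_dualLattice_iff (hp : p ≠ 0) (w : Fin n ⊕ Fin n → ℤ) :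
    (fun i => (w i : ℝ) / √p) ∈ dualLattice n (latticeA p n 𝒞)
      ↔ (fun i => (w i : ZMod p)) ∈ dualCode p n 𝒞 := by
  constructor
  · intro hw c hc
    obtain ⟨v, rfl⟩ := exists_intCast_lift c
    rw [etaDot_intCast, ← exists_intCast_eq_div_iff hp, ← etaDotR_div_sqrt]
    exact hw _ ⟨v, hc, rfl⟩
  · rintro hw _ ⟨v, hv, rfl⟩
    rw [etaDotR_div_sqrt, exists_intCast_eq_div_iff hp, ← etaDot_intCast]
    exact hw _ hv

lemma exists_eq_div_sqrt_of_mem_dualLattice (hp : p ≠ 0) (h𝒞 : 0 ∈ 𝒞)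
    {y : Fin n ⊕ Fin n → ℝ} (hy : y ∈ dualLattice n (latticeA p n 𝒞)) :
    ∃ w : Fin n ⊕ Fin n → ℤ, y = fun i => (w i : ℝ) / √p := by
  have hsqrt : √(p : ℝ) ≠ 0 := Real.sqrt_ne_zero'.2 (Nat.cast_pos.2 (Nat.pos_of_ne_zero hp))
  have hint : ∀ j, ∃ m : ℤ, y j * √p = m := fun j => by
    have hmem : Pi.single (Sum.swap j) √(p : ℝ) ∈ latticeA p n 𝒞 := by
      refine ⟨Pi.single (Sum.swap j) (p : ℤ), ?_, funext fun i => ?_⟩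
      · convert h𝒞 using 1
        funext i
        rw [Pi.apply_single (fun _ (z : ℤ) => (z : ZMod p)) (fun _ => Int.cast_zero)]
        simp
      · rw [Pi.apply_single (fun _ (z : ℤ) => (z : ℝ) / √p) (fun _ => by simp)]
        simp [Real.div_sqrt]
    obtain ⟨m, hm⟩ := hy _ hmem
    refine ⟨m, ?_⟩
    have hswap :
        (Pi.single j.swap √(p : ℝ) ∘ Sum.swap : Fin n ⊕ Fin n → ℝ) = Pi.single j √p := by
      simpa using Pi.single_comp_equiv (Equiv.sumComm (Fin n) (Fin n)) j.swap √(p : ℝ)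
    rwa [etaDotR_eq_dotProduct, hswap, dotProduct_single] at hm
  choose w hw using hint
  exact ⟨w, funext fun j => by rw [← hw j, mul_div_cancel_right₀ _ hsqrt]⟩

lemma dualLattice_latticeA (hp : p ≠ 0) (h𝒞 : 0 ∈ 𝒞) :
    dualLattice n (latticeA p n 𝒞) = latticeA p n (dualCode p n 𝒞) := by
  ext y
  constructor
  · intro hy
    obtain ⟨w, rfl⟩ := exists_eq_div_sqrt_of_mem_dualLattice hp h𝒞 hy
    exact ⟨w, (div_sqrt_mem_dualLattice_iff hp w).1 hy, rfl⟩
  · rintro ⟨w, hw, rfl⟩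
    exact (div_sqrt_mem_dualLattice_iff hp w).2 hw

lemma subset_of_latticeA_subset (hp : p ≠ 0) {S T : Set (Fin n ⊕ Fin n → ZMod p)}
    (h : latticeA p n S ⊆ latticeA p n T) : S ⊆ T := by
  have hsqrt : √(p : ℝ) ≠ 0 := Real.sqrt_ne_zero'.2 (Nat.cast_pos.2 (Nat.pos_of_ne_zero hp))
  intro c hc
  obtain ⟨v, rfl⟩ := exists_intCast_lift c
  obtain ⟨w, hw, hvw⟩ := h ⟨v, hc, rfl⟩
  have : v = w := funext fun i => by
    exact_mod_cast (div_left_inj' hsqrt).1 (congrFun hvw i)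
  rwa [this]

lemma latticeA_injective (hp : p ≠ 0) : Function.Injective (latticeA p n) :=
  fun _ _ h => (subset_of_latticeA_subset hp h.le).antisymm (subset_of_latticeA_subset hp h.ge)

end ConstructionA

/-- For a linear code `𝒞 ⊆ 𝔽_p^{2n}`, the dual of the Construction A lattice `Λ(𝒞)`
equals `Λ(𝒞^⊥)`; in particular `Λ(𝒞)` is self-dual iff `𝒞` is self-dual. -/
theorem stmt6 (p n : ℕ) (hp : p.Prime)
    (𝒞 : Submodule (ZMod p) (Fin n ⊕ Fin n → ZMod p)) :
    dualLattice n (latticeA p n 𝒞) = latticeA p n (dualCode p n 𝒞) ∧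
    (dualLattice n (latticeA p n 𝒞) = latticeA p n 𝒞 ↔
      dualCode p n 𝒞 = (𝒞 : Set (Fin n ⊕ Fin n → ZMod p))) := by
  have hdual := dualLattice_latticeA hp.ne_zero 𝒞.zero_mem
  rw [hdual]
  exact ⟨rfl, (latticeA_injective hp.ne_zero).eq_iff⟩
end

section
/- Let p be an odd prime and 𝒞 ⊆ 𝔽_p^{2n} a linear code. The Construction A lattice Λ(𝒞) is even with respect to the form λ ⊙ λ' = λ η λ'^T (i.e., λ ⊙ λ ∈ 2ℤ for all λ ∈ Λ(𝒞)) if and only if 𝒞 is self-orthogonal with respect to η (i.e., c ⊙ c' = 0 mod p for all c, c' ∈ 𝒞). -/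
open Finset

def etaQuad {R : Type*} [CommSemiring R] {n : ℕ} (x : Fin n ⊕ Fin n → R) : R :=
  ∑ i : Fin n, x (Sum.inl i) * x (Sum.inr i)

lemma map_etaQuad {R S : Type*} [CommSemiring R] [CommSemiring S] (f : R →+* S) {n : ℕ}
    (x : Fin n ⊕ Fin n → R) : f (etaQuad x) = etaQuad (f ∘ x) := by
  simp only [etaQuad, map_sum, map_mul, Function.comp_apply]

lemma etaDot_self (p n : ℕ) (c : Fin n ⊕ Fin n → ZMod p) : etaDot p n c c = 2 * etaQuad c := by
  simp only [etaDot, etaQuad, mul_sum]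
  exact sum_congr rfl fun i _ => by ring

lemma etaDot_add_self (p n : ℕ) (c c' : Fin n ⊕ Fin n → ZMod p) :
    etaDot p n (c + c') (c + c') = etaDot p n c c + etaDot p n c' c' + 2 * etaDot p n c c' := by
  simp only [etaDot, mul_sum, ← sum_add_distrib, Pi.add_apply]
  exact sum_congr rfl fun i _ => by ring

lemma etaDotR_self (n : ℕ) (x : Fin n ⊕ Fin n → ℝ) : etaDotR n x x = 2 * etaQuad x := by
  simp only [etaDotR, etaQuad, mul_sum]
  exact sum_congr rfl fun i _ => by ring

lemma etaQuad_div_sqrt {n : ℕ} (v : Fin n ⊕ Fin n → ℤ) {p : ℕ} :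
    etaQuad (fun i => (v i : ℝ) / Real.sqrt p) = ((etaQuad v : ℤ) : ℝ) / p := by
  have hs : Real.sqrt p * Real.sqrt p = p := Real.mul_self_sqrt p.cast_nonneg
  simp only [etaQuad, Int.cast_sum, Int.cast_mul, sum_div]
  exact sum_congr rfl fun i _ => by rw [div_mul_div_comm, hs]

lemma etaDotR_div_sqrt_even_iff {p : ℕ} [NeZero p] {n : ℕ} (v : Fin n ⊕ Fin n → ℤ) :
    (∃ m : ℤ, etaDotR n (fun i => (v i : ℝ) / Real.sqrt p) (fun i => (v i : ℝ) / Real.sqrt p)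
      = 2 * m) ↔ (p : ℤ) ∣ etaQuad v := by
  rw [etaDotR_self, etaQuad_div_sqrt]
  refine exists_congr fun m => ?_
  rw [mul_right_inj' two_ne_zero, div_eq_iff (NeZero.ne _), mul_comm]
  exact_mod_cast Iff.rfl

lemma latticeA_even_iff {p : ℕ} [NeZero p] {n : ℕ} (𝒞 : Set (Fin n ⊕ Fin n → ZMod p)) :
    (∀ x ∈ latticeA p n 𝒞, ∃ m : ℤ, etaDotR n x x = 2 * m) ↔ ∀ c ∈ 𝒞, etaQuad c = 0 := by
  constructor
  · intro heven c hc
    obtain ⟨v, rfl⟩ : ∃ v : Fin n ⊕ Fin n → ℤ, (Int.castRingHom (ZMod p)) ∘ v = c :=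
      ⟨fun i => (c i).val, funext fun i => by simp⟩
    rw [← map_etaQuad, eq_intCast, ZMod.intCast_zmod_eq_zero_iff_dvd,
      ← etaDotR_div_sqrt_even_iff]
    exact heven _ ⟨v, hc, rfl⟩
  · rintro hq _ ⟨v, hv, rfl⟩
    rw [etaDotR_div_sqrt_even_iff, ← ZMod.intCast_zmod_eq_zero_iff_dvd,
      ← eq_intCast (Int.castRingHom (ZMod p)), map_etaQuad]
    exact hq _ hv

lemma forall_etaDot_eq_zero_iff_etaQuad {p n : ℕ} (h2 : IsUnit (2 : ZMod p))
    (𝒞 : Submodule (ZMod p) (Fin n ⊕ Fin n → ZMod p)) :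
    (∀ c ∈ 𝒞, ∀ c' ∈ 𝒞, etaDot p n c c' = 0) ↔ ∀ c ∈ 𝒞, etaQuad c = 0 := by
  have hiso : ∀ c, etaDot p n c c = 0 ↔ etaQuad c = 0 := fun c => by
    rw [etaDot_self, h2.mul_right_eq_zero]
  refine ⟨fun h c hc => (hiso c).mp (h c hc c hc), fun h c hc c' hc' => ?_⟩
  have hsum := etaDot_add_self p n c c'
  rw [(hiso _).mpr (h _ (𝒞.add_mem hc hc')), (hiso c).mpr (h c hc), (hiso c').mpr (h c' hc'),
    zero_add, zero_add, eq_comm, h2.mul_right_eq_zero] at hsum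
  exact hsum

/-- For an odd prime `p` and a linear code `𝒞 ⊆ 𝔽_p^{2n}`, the Construction A lattice
`Λ(𝒞)` is even with respect to `η` iff `𝒞` is self-orthogonal with respect to `η`. -/
theorem stmt7 (p n : ℕ) (hp : p.Prime) (hp2 : p ≠ 2)
    (𝒞 : Submodule (ZMod p) (Fin n ⊕ Fin n → ZMod p)) :
    (∀ x ∈ latticeA p n 𝒞, ∃ m : ℤ, etaDotR n x x = 2 * m) ↔
      (∀ c ∈ 𝒞, ∀ c' ∈ 𝒞, etaDot p n c c' = 0) := by
  have : NeZero p := ⟨hp.ne_zero⟩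
  have h2 : IsUnit (2 : ZMod p) := by
    exact_mod_cast (ZMod.isUnit_iff_coprime 2 p).mpr
      ((Nat.coprime_primes Nat.prime_two hp).mpr hp2.symm)
  rw [latticeA_even_iff, forall_etaDot_eq_zero_iff_etaQuad h2]
  rfl
end

section
/- Let 𝒞 ⊆ 𝔽_2^{2n} be a binary linear code. The Construction A lattice Λ(𝒞) = {v/√2 : v ∈ ℤ^{2n}, v mod 2 ∈ 𝒞} is even with respect to the form given by η = [[0,I_n],[I_n,0]] if and only if 𝒞 is doubly-even with respect to η, i.e., c ⊙ c ≡ 0 mod 4 for all c ∈ 𝒞 (where c ⊙ c = 2α·β is computed over ℤ with representatives in {0,1}). -/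
/-- The integer-valued inner product with respect to `η = [[0,I_n],[I_n,0]]`, computed
over `ℤ` using the representatives `{0,1}`. -/
def etaDotZ (p n : ℕ) (c c' : Fin n ⊕ Fin n → ZMod p) : ℤ :=
  ∑ i : Fin n, (((c (Sum.inl i)).val : ℤ) * ((c' (Sum.inr i)).val : ℤ)
    + ((c (Sum.inr i)).val : ℤ) * ((c' (Sum.inl i)).val : ℤ))

lemma etaDotR_int (n : ℕ) (v : Fin n ⊕ Fin n → ℤ) :
    etaDotR n (fun i => (v i : ℝ) / Real.sqrt 2) (fun i => (v i : ℝ) / Real.sqrt 2)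
      = ((∑ i : Fin n, v (Sum.inl i) * v (Sum.inr i) : ℤ) : ℝ) := by
  have hsq : Real.sqrt 2 * Real.sqrt 2 = 2 := Real.mul_self_sqrt (by norm_num)
  unfold etaDotR
  push_cast
  refine Finset.sum_congr rfl fun i _ => ?_
  rw [div_mul_div_comm, div_mul_div_comm, hsq]
  ring

lemma etaDotZ_two (n : ℕ) (c : Fin n ⊕ Fin n → ZMod 2) :
    etaDotZ 2 n c c
      = 2 * ∑ i : Fin n, ((c (Sum.inl i)).val : ℤ) * ((c (Sum.inr i)).val : ℤ) := by
  unfold etaDotZ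
  rw [Finset.mul_sum]
  exact Finset.sum_congr rfl fun i _ => by ring

lemma parity_eq (n : ℕ) (v : Fin n ⊕ Fin n → ℤ) :
    (((∑ i : Fin n, v (Sum.inl i) * v (Sum.inr i) : ℤ) : ZMod 2))
      = ((∑ i : Fin n, (((v (Sum.inl i) : ZMod 2)).val : ℤ)
            * (((v (Sum.inr i) : ZMod 2)).val : ℤ) : ℤ) : ZMod 2) := by
  push_cast
  exact Finset.sum_congr rfl fun i _ => by
    simp [ZMod.natCast_val, ZMod.intCast_cast]

/-- For a binary linear code `𝒞 ⊆ 𝔽_2^{2n}`, the Construction A lattice `Λ(𝒞)` is even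
with respect to `η` iff `𝒞` is doubly-even with respect to `η`, i.e. `c ⊙ c ≡ 0 mod 4`
for all `c ∈ 𝒞` (with `c ⊙ c` computed over `ℤ` using representatives in `{0,1}`). -/
theorem stmt8 (n : ℕ) (𝒞 : Submodule (ZMod 2) (Fin n ⊕ Fin n → ZMod 2)) :
    (∀ x ∈ latticeA 2 n 𝒞, ∃ m : ℤ, etaDotR n x x = 2 * m) ↔
      (∀ c ∈ 𝒞, (4 : ℤ) ∣ etaDotZ 2 n c c) := by
  constructor
  · intro h c hc
    set v : Fin n ⊕ Fin n → ℤ := fun i => ((c i).val : ℤ) with hv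
    have hmem : (fun i => ((v i : ZMod 2))) ∈ (𝒞 : Set (Fin n ⊕ Fin n → ZMod 2)) := by
      have : (fun i => ((v i : ZMod 2))) = c := by
        funext i
        simp [hv, ZMod.natCast_val, ZMod.cast_id]
      rw [this]; exact hc
    obtain ⟨m, hm⟩ := h (fun i => (v i : ℝ) / Real.sqrt 2) ⟨v, hmem, by norm_num⟩
    rw [etaDotR_int] at hm
    have hS : (∑ i : Fin n, v (Sum.inl i) * v (Sum.inr i)) = 2 * m := by
      exact_mod_cast hm
    rw [etaDotZ_two]
    have : (∑ i : Fin n, ((c (Sum.inl i)).val : ℤ) * ((c (Sum.inr i)).val : ℤ))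
        = 2 * m := hS
    rw [this]
    exact ⟨m, by ring⟩
  · intro h x hx
    obtain ⟨v, hmem, rfl⟩ := hx
    have h4 := h _ hmem
    rw [etaDotZ_two] at h4
    set T : ℤ := ∑ i : Fin n, (((v (Sum.inl i) : ZMod 2)).val : ℤ)
        * (((v (Sum.inr i) : ZMod 2)).val : ℤ) with hT
    have h2T : (2 : ℤ) ∣ T := by
      rcases h4 with ⟨k, hk⟩
      exact ⟨k, by linarith⟩
    set S : ℤ := ∑ i : Fin n, v (Sum.inl i) * v (Sum.inr i) with hS
    have h2S : (2 : ℤ) ∣ S := by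
      have hcast : ((S : ZMod 2)) = ((T : ZMod 2)) := parity_eq n v
      have hT0 : ((T : ZMod 2)) = 0 := (ZMod.intCast_zmod_eq_zero_iff_dvd T 2).2 h2T
      exact (ZMod.intCast_zmod_eq_zero_iff_dvd S 2).1 (hcast.trans hT0)
    obtain ⟨m, hm⟩ := h2S
    refine ⟨m, ?_⟩
    have := etaDotR_int n v
    norm_num at this ⊢
    rw [this]
    exact_mod_cast hm
end

section
/- Let H be an n×2n matrix over 𝔽_2 with linearly independent rows satisfying H η H^T = 0 mod 2 and diag(H η H^T) = 0 mod 4 (where H η H^T is computed over ℤ with entries in {0,1}). Then the binary code 𝒞 generated by the rows of H is doubly-even with respect to η: c ⊙ c ≡ 0 mod 4 for all c ∈ 𝒞. -/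
/-- The mod-2 reduction of the η-inner product, as a function into `ZMod 2`. -/
def blForm (n : ℕ) (c c' : Fin n ⊕ Fin n → ZMod 2) : ZMod 2 :=
  ∑ i : Fin n, (c (Sum.inl i) * c' (Sum.inr i) + c (Sum.inr i) * c' (Sum.inl i))

/-- The mod-2 reduction of half of the η-self-inner-product. -/
def gForm (n : ℕ) (c : Fin n ⊕ Fin n → ZMod 2) : ZMod 2 :=
  ∑ i : Fin n, c (Sum.inl i) * c (Sum.inr i)

lemma cast_eta (n : ℕ) (c c' : Fin n ⊕ Fin n → ZMod 2) :
    ((etaDotZ 2 n c c' : ℤ) : ZMod 2) = blForm n c c' := by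
  simp [etaDotZ, blForm, ZMod.natCast_val, ZMod.cast_id]

lemma eta_self (n : ℕ) (c : Fin n ⊕ Fin n → ZMod 2) :
    etaDotZ 2 n c c
      = 2 * ∑ i : Fin n, (((c (Sum.inl i)).val : ℤ) * ((c (Sum.inr i)).val : ℤ)) := by
  rw [etaDotZ, Finset.mul_sum]
  exact Finset.sum_congr rfl fun i _ => by ring

lemma cast_half (n : ℕ) (c : Fin n ⊕ Fin n → ZMod 2) :
    (((∑ i : Fin n, (((c (Sum.inl i)).val : ℤ) * ((c (Sum.inr i)).val : ℤ))) : ℤ) : ZMod 2)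
      = gForm n c := by
  simp [gForm, ZMod.natCast_val, ZMod.cast_id]

lemma g_add (n : ℕ) (a b : Fin n ⊕ Fin n → ZMod 2) :
    gForm n (a + b) = gForm n a + gForm n b + blForm n a b := by
  simp only [gForm, blForm, ← Finset.sum_add_distrib]
  exact Finset.sum_congr rfl fun i _ => by simp only [Pi.add_apply]; ring

/-- Let `H` be an `n × 2n` binary matrix with linearly independent rows satisfying
`H η H^T = 0 mod 2` and `diag(H η H^T) = 0 mod 4` (computed over `ℤ` with entries in
`{0,1}`).  Then the code generated by the rows of `H` is doubly-even with respect to `η`: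
`c ⊙ c ≡ 0 mod 4` for every codeword `c`. -/
theorem stmt9 (n : ℕ) (H : Matrix (Fin n) (Fin n ⊕ Fin n) (ZMod 2))
    (hind : LinearIndependent (ZMod 2) (fun i : Fin n => H i))
    (h2 : ∀ i j, (2 : ℤ) ∣ etaDotZ 2 n (H i) (H j))
    (h4 : ∀ i, (4 : ℤ) ∣ etaDotZ 2 n (H i) (H i)) :
    ∀ c ∈ Submodule.span (ZMod 2) (Set.range fun i : Fin n => H i),
      (4 : ℤ) ∣ etaDotZ 2 n c c := by
  classical
  have hsmul : ∀ (s : ZMod 2) (x : Fin n ⊕ Fin n → ZMod 2), s • x = 0 ∨ s • x = x := by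
    intro s x
    have : s = 0 ∨ s = 1 := by revert s; decide
    rcases this with h | h
    · left; rw [h, zero_smul]
    · right; rw [h, one_smul]
  -- the bilinear form vanishes on the span
  have hBl : ∀ a ∈ Submodule.span (ZMod 2) (Set.range fun i : Fin n => H i),
      ∀ b ∈ Submodule.span (ZMod 2) (Set.range fun i : Fin n => H i),
      blForm n a b = 0 := by
    intro a ha b hb
    induction ha, hb using Submodule.span_induction₂ with
    | mem_mem x y hx hy =>
        obtain ⟨i, rfl⟩ := hx
        obtain ⟨j, rfl⟩ := hy
        have := h2 i j
        rw [← cast_eta]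
        exact (ZMod.intCast_zmod_eq_zero_iff_dvd _ 2).mpr (by exact_mod_cast this)
    | zero_left y hy => simp [blForm]
    | zero_right x hx => simp [blForm]
    | add_left x y z hx hy hz px py =>
        have : blForm n (x + y) z = blForm n x z + blForm n y z := by
          simp only [blForm, ← Finset.sum_add_distrib]
          exact Finset.sum_congr rfl fun i _ => by simp only [Pi.add_apply]; ring
        rw [this, px, py, add_zero]
    | add_right x y z hx hy hz px py =>
        have : blForm n x (y + z) = blForm n x y + blForm n x z := by
          simp only [blForm, ← Finset.sum_add_distrib]
          exact Finset.sum_congr rfl fun i _ => by simp only [Pi.add_apply]; ring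
        rw [this, px, py, add_zero]
    | smul_left s x y hx hy p =>
        rcases hsmul s x with h | h
        · rw [h]; simp [blForm]
        · rw [h]; exact p
    | smul_right s x y hx hy p =>
        rcases hsmul s y with h | h
        · rw [h]; simp [blForm]
        · rw [h]; exact p
  -- gForm vanishes on the span
  have hg : ∀ c ∈ Submodule.span (ZMod 2) (Set.range fun i : Fin n => H i),
      gForm n c = 0 := by
    intro c hc
    induction hc using Submodule.span_induction with
    | mem x hx =>
        obtain ⟨i, rfl⟩ := hx
        have h := h4 i
        rw [eta_self] at h
        have h2' : (2 : ℤ) ∣ ∑ i' : Fin n,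
            (((H i (Sum.inl i')).val : ℤ) * ((H i (Sum.inr i')).val : ℤ)) := by
          rcases h with ⟨k, hk⟩
          exact ⟨k, by linarith⟩
        rw [← cast_half]
        exact (ZMod.intCast_zmod_eq_zero_iff_dvd _ 2).mpr (by exact_mod_cast h2')
    | zero => simp [gForm]
    | add x y hx hy px py =>
        rw [g_add, px, py, hBl x hx y hy, add_zero, add_zero]
    | smul s x hx p =>
        rcases hsmul s x with h | h
        · rw [h]; simp [gForm]
        · rw [h]; exact p
  intro c hc
  rw [eta_self]
  have := hg c hc
  rw [← cast_half] at this
  have hdvd : (2 : ℤ) ∣ ∑ i : Fin n,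
      (((c (Sum.inl i)).val : ℤ) * ((c (Sum.inr i)).val : ℤ)) := by
    have := (ZMod.intCast_zmod_eq_zero_iff_dvd _ 2).mp this
    exact_mod_cast this
  rcases hdvd with ⟨k, hk⟩
  exact ⟨k, by rw [hk]; ring⟩
end

section
/- Let 𝒞 ⊆ 𝔽_p^n × 𝔽_p^n be a linear code and ψ_{ab}(τ,τ̄) = Σ_{k_1,k_2 ∈ ℤ} q^{(p/4)((a+b)/p + k_1 + k_2)²} q̄^{(p/4)((a−b)/p + k_1 − k_2)²}. Then the complete enumerator polynomial W_𝒞 evaluated at x_{ab} = ψ_{ab} equals the lattice theta function of the Construction A lattice: W_𝒞({ψ_{ab}}) = Θ_{Λ̃(𝒞)}(τ,τ̄) = Σ_{(p_L,p_R) ∈ Λ̃(𝒞)} q^{p_L²/2} q̄^{p_R²/2}. -/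
/-!
Write a point of `Λ̃(𝒞)` as `λ = (v, w)/√p` with `v, w ∈ ℤⁿ` and `(v mod p, w mod p) ∈ 𝒞`.
Splitting `v = c₁ + p k₁`, `w = c₂ + p k₂` with digits `c ∈ 𝒞` and `k ∈ ℤⁿ × ℤⁿ` identifies
`Λ̃(𝒞)` with `𝒞 × (ℤ × ℤ)ⁿ`. The weight `q^{p_L²/2} q̄^{p_R²/2}` is a product over the coordinates,
and the sum over `k` of the `i`-th factor is `ψ_{c_i}`; so the theta series is `Σ_c Π_i ψ_{c_i}`,
which is the enumerator after grouping the coordinates by the value of `c_i`. Everything converges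
absolutely because `|q^{(v+w)²/4p} q̄^{(v-w)²/4p}| = exp (-π Im τ (v² + w²) / p)`.
-/

open Complex

noncomputable section

/-- The building block `ψ_{ab}(τ,τ̄) = Σ_{k₁,k₂∈ℤ} q^{(p/4)((a+b)/p+k₁+k₂)²}
q̄^{(p/4)((a−b)/p+k₁−k₂)²}` with `q = e^{2πiτ}`, `q̄ = e^{−2πiτ̄}` and `τ̄` the complex
conjugate of `τ`. -/
def psi (p : ℕ) (τ : ℂ) (a b : ZMod p) : ℂ :=
  ∑' k : ℤ × ℤ,
    Complex.exp (2 * (Real.pi : ℂ) * Complex.I * τ * ((p : ℂ) / 4) *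
        (((a.val : ℂ) + (b.val : ℂ)) / p + (k.1 : ℂ) + (k.2 : ℂ)) ^ 2) *
    Complex.exp (-(2 * (Real.pi : ℂ) * Complex.I) * (starRingEnd ℂ τ) * ((p : ℂ) / 4) *
        (((a.val : ℂ) - (b.val : ℂ)) / p + (k.1 : ℂ) - (k.2 : ℂ)) ^ 2)

/-- `wt_{ab}(c) = |{i : c_i = (a,b)}|`. -/
def wtab (p n : ℕ) (c : Fin n → ZMod p × ZMod p) (ab : ZMod p × ZMod p) : ℕ :=
  (Finset.univ.filter fun i => c i = ab).card

/-- The Construction A lattice of `𝒞` in the momentum coordinates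
`(p_L, p_R) = ((λ₁+λ₂)/√2, (λ₁−λ₂)/√2)` with `λ₁ = (α+pk₁)/√p`, `λ₂ = (β+pk₂)/√p`. -/
def tildeLattice (p n : ℕ) (𝒞 : Set (Fin n → ZMod p × ZMod p)) :
    Set ((Fin n → ℝ) × (Fin n → ℝ)) :=
  {x | ∃ v w : Fin n → ℤ,
        (fun i => (((v i : ZMod p)), ((w i : ZMod p)))) ∈ 𝒞 ∧
        x.1 = (fun i => ((v i : ℝ) + (w i : ℝ)) / Real.sqrt (2 * p)) ∧
        x.2 = (fun i => ((v i : ℝ) - (w i : ℝ)) / Real.sqrt (2 * p))}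

open Real

lemma summable_exp_neg_mul_int_sq {c : ℝ} (hc : 0 < c) :
    Summable fun n : ℤ => rexp (-c * n ^ 2) := by
  have him : (I * ((c / π : ℝ) : ℂ)).im = c / π := by rw [I_mul_im, ofReal_re]
  have h := ((summable_jacobiTheta₂_term_iff 0 (I * ((c / π : ℝ) : ℂ))).2
    (by rw [him]; exact div_pos hc pi_pos)).norm
  refine h.congr fun n => ?_
  rw [norm_jacobiTheta₂_term, him, zero_im, mul_zero, sub_zero]
  field_simp

section ProdTsum

variable {R γ : Type*} [NormedCommRing R]

lemma summable_norm_prod_fin : ∀ {n : ℕ} {f : Fin n → γ → R},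
    (∀ i, Summable fun x => ‖f i x‖) → Summable fun K : Fin n → γ => ‖∏ i, f i (K i)‖
  | 0, _, _ => Summable.of_finite
  | _ + 1, _, hf => by
    rw [← (Fin.consEquiv fun _ => γ).summable_iff]
    simpa [Function.comp_def, Fin.prod_univ_succ] using
      (hf 0).mul_norm (summable_norm_prod_fin fun i => hf i.succ)

lemma prod_tsum_eq_tsum_prod_fin [CompleteSpace R] : ∀ {n : ℕ} {f : Fin n → γ → R},
    (∀ i, Summable fun x => ‖f i x‖) → ∏ i, ∑' x, f i x = ∑' K : Fin n → γ, ∏ i, f i (K i)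
  | 0, _, _ => by simp
  | _ + 1, _, hf => by
    rw [Fin.prod_univ_succ, prod_tsum_eq_tsum_prod_fin fun i => hf i.succ,
      tsum_mul_tsum_of_summable_norm (hf 0) (summable_norm_prod_fin fun i => hf i.succ),
      ← (Fin.consEquiv fun _ => γ).tsum_eq]
    simp [Fin.prod_univ_succ]

end ProdTsum

def residueQuotientEquiv (p : ℕ) [NeZero p] : ℤ ≃ ZMod p × ℤ where
  toFun m := (m, m / p)
  invFun ak := ak.1.val + p * ak.2
  left_inv m := by
    dsimp only
    rw [ZMod.val_intCast, Int.emod_add_mul_ediv]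
  right_inv := by
    rintro ⟨a, k⟩
    have hval : (a.val : ℤ) / p = 0 :=
      Int.ediv_eq_zero_of_lt (by positivity) (by exact_mod_cast ZMod.val_lt a)
    ext
    · simp
    · dsimp only
      rw [Int.add_mul_ediv_left _ _ (by exact_mod_cast NeZero.ne p), hval, zero_add]

lemma intCast_residueQuotientEquiv_symm {p : ℕ} [NeZero p] (a : ZMod p) (k : ℤ) :
    (((residueQuotientEquiv p).symm (a, k) : ℤ) : ZMod p) = a :=
  congrArg Prod.fst ((residueQuotientEquiv p).apply_symm_apply (a, k))

-- The weight `q^{p_L²/2} q̄^{p_R²/2}` of one coordinate `λ = (v, w)/√p` of a lattice point.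
def latticeWeight (p : ℕ) (τ : ℂ) (vw : ℤ × ℤ) : ℂ :=
  cexp (2 * (π : ℂ) * I * τ * (((vw.1 : ℂ) + vw.2) ^ 2 / (4 * p))) *
  cexp (-(2 * (π : ℂ) * I) * starRingEnd ℂ τ * (((vw.1 : ℂ) - vw.2) ^ 2 / (4 * p)))

lemma norm_latticeWeight (p : ℕ) (τ : ℂ) (vw : ℤ × ℤ) :
    ‖latticeWeight p τ vw‖ =
      rexp (-(π * τ.im / p) * vw.1 ^ 2) * rexp (-(π * τ.im / p) * vw.2 ^ 2) := by
  have h₁ : 2 * (π : ℂ) * I * τ * (((vw.1 : ℂ) + vw.2) ^ 2 / (4 * p)) =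
      ((2 * π * ((vw.1 + vw.2) ^ 2 / (4 * p)) : ℝ) : ℂ) * (I * τ) := by
    push_cast
    ring
  have h₂ : -(2 * (π : ℂ) * I) * starRingEnd ℂ τ * (((vw.1 : ℂ) - vw.2) ^ 2 / (4 * p)) =
      ((2 * π * ((vw.1 - vw.2) ^ 2 / (4 * p)) : ℝ) : ℂ) * -(I * starRingEnd ℂ τ) := by
    push_cast
    ring
  rw [latticeWeight, norm_mul, norm_exp, norm_exp, h₁, h₂, re_ofReal_mul, re_ofReal_mul,
    neg_re, I_mul_re, I_mul_re, conj_im, ← Real.exp_add, ← Real.exp_add]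
  congr 1
  by_cases hp : (p : ℝ) = 0
  · simp [hp]
  · field_simp
    ring

lemma summable_norm_latticeWeight {p : ℕ} (hp : p ≠ 0) {τ : ℂ} (hτ : 0 < τ.im) :
    Summable fun vw : ℤ × ℤ => ‖latticeWeight p τ vw‖ := by
  have hc : 0 < π * τ.im / p := by positivity
  have h := summable_exp_neg_mul_int_sq hc
  simpa only [norm_latticeWeight] using
    h.mul_of_nonneg h (fun _ => (exp_pos _).le) (fun _ => (exp_pos _).le)

def liftPair (p : ℕ) [NeZero p] (ab : ZMod p × ZMod p) (k : ℤ × ℤ) : ℤ × ℤ :=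
  ((residueQuotientEquiv p).symm (ab.1, k.1), (residueQuotientEquiv p).symm (ab.2, k.2))

lemma liftPair_injective (p : ℕ) [NeZero p] :
    Function.Injective fun abk : (ZMod p × ZMod p) × (ℤ × ℤ) => liftPair p abk.1 abk.2 := by
  rintro ⟨⟨a, b⟩, k₁, k₂⟩ ⟨⟨a', b'⟩, k₁', k₂'⟩ h
  simp only [liftPair, Prod.mk.injEq, (residueQuotientEquiv p).symm.injective.eq_iff] at h
  simp only [h]

lemma psi_eq_tsum_latticeWeight (p : ℕ) [NeZero p] (τ : ℂ) (a b : ZMod p) :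
    psi p τ a b = ∑' k : ℤ × ℤ, latticeWeight p τ (liftPair p (a, b) k) := by
  have hp : (p : ℂ) ≠ 0 := NeZero.ne _
  refine tsum_congr fun k => ?_
  simp only [latticeWeight, liftPair, residueQuotientEquiv, Equiv.coe_fn_symm_mk]
  push_cast
  congr 2 <;> field_simp <;> ring

lemma summable_norm_latticeWeight_liftPair {p : ℕ} [NeZero p] {τ : ℂ} (hτ : 0 < τ.im)
    (ab : ZMod p × ZMod p) :
    Summable fun k : ℤ × ℤ => ‖latticeWeight p τ (liftPair p ab k)‖ :=
  (summable_norm_latticeWeight (NeZero.ne p) hτ).comp_injective fun k k' h =>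
    congrArg Prod.snd (@liftPair_injective p _ (ab, k) (ab, k') h)

def codeLift (p n : ℕ) [NeZero p] (𝒞 : Set (Fin n → ZMod p × ZMod p))
    (cK : 𝒞 × (Fin n → ℤ × ℤ)) : Fin n → ℤ × ℤ :=
  fun i => liftPair p (cK.1.1 i) (cK.2 i)

lemma codeLift_injective (p n : ℕ) [NeZero p] (𝒞 : Set (Fin n → ZMod p × ZMod p)) :
    Function.Injective (codeLift p n 𝒞) := by
  rintro ⟨c, K⟩ ⟨c', K'⟩ h
  have h' : ∀ i, (c.1 i, K i) = (c'.1 i, K' i) := fun i => liftPair_injective p (congrFun h i)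
  simp only [Prod.mk.injEq] at h'
  exact Prod.ext (Subtype.ext <| funext fun i => (h' i).1) (funext fun i => (h' i).2)

def latticeCoords (p n : ℕ) (vw : Fin n → ℤ × ℤ) : (Fin n → ℝ) × (Fin n → ℝ) :=
  (fun i => ((vw i).1 + (vw i).2) / √(2 * p), fun i => ((vw i).1 - (vw i).2) / √(2 * p))

lemma latticeCoords_injective {p : ℕ} (hp : p ≠ 0) (n : ℕ) :
    Function.Injective (latticeCoords p n) := by
  have hs : √(2 * p) ≠ 0 := by positivity
  intro vw vw' h
  simp only [latticeCoords, Prod.mk.injEq, funext_iff, div_left_inj' hs] at h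
  funext i
  have h₁ := h.1 i
  have h₂ := h.2 i
  have hv : ((vw i).1 : ℝ) = (vw' i).1 := by linarith
  have hw : ((vw i).2 : ℝ) = (vw' i).2 := by linarith
  exact Prod.ext (by exact_mod_cast hv) (by exact_mod_cast hw)

lemma tildeLattice_eq_range (p n : ℕ) [NeZero p] (𝒞 : Set (Fin n → ZMod p × ZMod p)) :
    tildeLattice p n 𝒞 = Set.range (latticeCoords p n ∘ codeLift p n 𝒞) := by
  ext x
  constructor
  · rintro ⟨v, w, hc, h₁, h₂⟩
    refine ⟨(⟨_, hc⟩, fun i => ((residueQuotientEquiv p (v i)).2,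
      (residueQuotientEquiv p (w i)).2)), ?_⟩
    have hvw : codeLift p n 𝒞 (⟨_, hc⟩, fun i => ((residueQuotientEquiv p (v i)).2,
        (residueQuotientEquiv p (w i)).2)) = fun i => (v i, w i) := by
      funext i
      exact Prod.ext ((residueQuotientEquiv p).symm_apply_apply (v i))
        ((residueQuotientEquiv p).symm_apply_apply (w i))
    rw [Function.comp_apply, hvw]
    exact Prod.ext h₁.symm h₂.symm
  · rintro ⟨cK, rfl⟩
    refine ⟨fun i => (codeLift p n 𝒞 cK i).1, fun i => (codeLift p n 𝒞 cK i).2, ?_, rfl, rfl⟩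
    convert cK.1.2 using 1
    funext i
    exact Prod.ext (intCast_residueQuotientEquiv_symm _ _) (intCast_residueQuotientEquiv_symm _ _)

lemma exp_mul_exp_latticeCoords {p : ℕ} (hp : p ≠ 0) (τ : ℂ) {n : ℕ} (vw : Fin n → ℤ × ℤ) :
    cexp (2 * (π : ℂ) * I * τ * ((∑ i, ((latticeCoords p n vw).1 i : ℂ) ^ 2) / 2)) *
      cexp (-(2 * (π : ℂ) * I) * starRingEnd ℂ τ *
        ((∑ i, ((latticeCoords p n vw).2 i : ℂ) ^ 2) / 2)) =
      ∏ i, latticeWeight p τ (vw i) := by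
  have hp' : (p : ℂ) ≠ 0 := by exact_mod_cast hp
  have hsqrt : ((√(2 * p) : ℝ) : ℂ) ^ 2 = 2 * p := by
    rw [← ofReal_pow, Real.sq_sqrt (by positivity)]
    push_cast
    ring
  simp only [latticeWeight, Finset.prod_mul_distrib, ← Complex.exp_sum, Finset.sum_div,
    Finset.mul_sum]
  congr 2 <;> refine Finset.sum_congr rfl fun i _ => ?_ <;>
    simp only [latticeCoords, ofReal_div, div_pow, hsqrt] <;> push_cast <;> field_simp <;> ring

lemma prod_pow_wtab {p n : ℕ} [NeZero p] {M : Type*} [CommMonoid M]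
    (f : ZMod p × ZMod p → M) (c : Fin n → ZMod p × ZMod p) :
    ∏ ab, f ab ^ wtab p n c ab = ∏ i, f (c i) := by
  rw [← Finset.prod_fiberwise' Finset.univ c f]
  exact Finset.prod_congr rfl fun ab _ => by rw [Finset.prod_const, wtab]

lemma summable_norm_prod_latticeWeight_codeLift {p n : ℕ} [NeZero p]
    {𝒞 : Set (Fin n → ZMod p × ZMod p)} {τ : ℂ} (hτ : 0 < τ.im) (c : 𝒞) :
    Summable fun K => ‖∏ i, latticeWeight p τ (codeLift p n 𝒞 (c, K) i)‖ :=
  summable_norm_prod_fin (f := fun i (k : ℤ × ℤ) => latticeWeight p τ (liftPair p (c.1 i) k))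
    fun i => summable_norm_latticeWeight_liftPair hτ (c.1 i)

theorem stmt11_general (p n : ℕ) [NeZero p]
    (𝒞 : Submodule (ZMod p) (Fin n → ZMod p × ZMod p)) [Fintype 𝒞]
    (τ : ℂ) (hτ : 0 < τ.im) :
    ∑ c : 𝒞, ∏ ab : ZMod p × ZMod p,
        psi p τ ab.1 ab.2 ^ wtab p n (c : Fin n → ZMod p × ZMod p) ab =
      ∑' x : tildeLattice p n 𝒞,
        Complex.exp (2 * (Real.pi : ℂ) * Complex.I * τ *
            ((∑ i, ((x.val.1 i : ℂ)) ^ 2) / 2)) *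
        Complex.exp (-(2 * (Real.pi : ℂ) * Complex.I) * (starRingEnd ℂ τ) *
            ((∑ i, ((x.val.2 i : ℂ)) ^ 2) / 2)) := by
  set F : ↥(𝒞 : Set (Fin n → ZMod p × ZMod p)) × (Fin n → ℤ × ℤ) → ℂ :=
    fun cK => ∏ i, latticeWeight p τ (codeLift p n 𝒞 cK i)
  have hfiber : ∀ c : 𝒞, Summable fun K => ‖F (c, K)‖ := fun c =>
    summable_norm_prod_latticeWeight_codeLift hτ c
  have hF : Summable F :=
    ((summable_prod_of_nonneg fun _ => norm_nonneg _).2 ⟨hfiber, .of_finite⟩).of_norm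
  rw [tildeLattice_eq_range, ← (Equiv.ofInjective _
    ((latticeCoords_injective (NeZero.ne p) n).comp (codeLift_injective p n 𝒞))).tsum_eq]
  calc ∑ c : 𝒞, ∏ ab : ZMod p × ZMod p, psi p τ ab.1 ab.2 ^ wtab p n c ab
      = ∑ c : 𝒞, ∏ i, psi p τ (c.1 i).1 (c.1 i).2 := by simp only [prod_pow_wtab]
    _ = ∑ c : 𝒞, ∑' K, F (c, K) := by
      refine Finset.sum_congr rfl fun c _ => ?_
      simp only [psi_eq_tsum_latticeWeight]
      exact prod_tsum_eq_tsum_prod_fin fun i => summable_norm_latticeWeight_liftPair hτ (c.1 i)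
    _ = ∑' cK, F cK :=
      (tsum_fintype _).symm.trans (hF.tsum_prod' fun c => (hfiber c).of_norm).symm
    _ = _ := tsum_congr fun cK => by
      simp only [Equiv.ofInjective_apply, Function.comp_apply]
      exact (exp_mul_exp_latticeCoords (NeZero.ne p) τ _).symm

/-- The complete enumerator polynomial of a linear code `𝒞 ⊆ 𝔽_p^n × 𝔽_p^n` evaluated at
`x_{ab} = ψ_{ab}` equals the lattice theta function of the Construction A lattice
`Λ̃(𝒞)`. -/
theorem stmt11 (p n : ℕ) [NeZero p] (hp : p.Prime)
    (𝒞 : Submodule (ZMod p) (Fin n → ZMod p × ZMod p)) [Fintype 𝒞]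
    (τ : ℂ) (hτ : 0 < τ.im) :
    ∑ c : 𝒞, ∏ ab : ZMod p × ZMod p,
        psi p τ ab.1 ab.2 ^ wtab p n (c : Fin n → ZMod p × ZMod p) ab =
      ∑' x : tildeLattice p n 𝒞,
        Complex.exp (2 * (Real.pi : ℂ) * Complex.I * τ *
            ((∑ i, ((x.val.1 i : ℂ)) ^ 2) / 2)) *
        Complex.exp (-(2 * (Real.pi : ℂ) * Complex.I) * (starRingEnd ℂ τ) *
            ((∑ i, ((x.val.2 i : ℂ)) ^ 2) / 2)) :=
  stmt11_general p n 𝒞 τ hτ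
end
end

section
/- Let 𝔠 = (c^(1),...,c^(g)) be a tuple of vectors in 𝔽_2^n and 𝔖 the binary code generated by 1_n and c^(1),...,c^(g). Then 𝔖 is self-orthogonal (with respect to the standard dot product mod 2) if and only if the tuple A(𝔠) = (e_v(𝔠))_{v∈𝔽_2^g} is type-I-admissible, meaning: n = Σ_v e_v ≡ 0 mod 2, Σ_v e_v (v S_d v^T) ≡ 0 mod 2 for all integral diagonal g×g matrices S_d, and Σ_v e_v (v S_nd v^T) ≡ 0 mod 4 for all integral symmetric g×g matrices S_nd with zero diagonal (sums over the integers using representatives {0,1}). -/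
open Matrix

/-- The composition `e_v(𝔠) = |{j : (c_j^{(1)},…,c_j^{(g)}) = v}|`. -/
def eTup (p n g : ℕ) (c : Fin g → (Fin n → ZMod p)) (v : Fin g → ZMod p) : ℕ :=
  (Finset.univ.filter fun j : Fin n => ∀ i, c i j = v i).card

/-- The integral quadratic form `v S v^T`, computed over `ℤ` using the representatives
`{0,…,p−1}` for the entries of `v`. -/
def quadInt (p g : ℕ) (v : Fin g → ZMod p) (S : Matrix (Fin g) (Fin g) ℤ) : ℤ :=
  ∑ i, ∑ j, ((v i).val : ℤ) * S i j * ((v j).val : ℤ)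

/-- The integral inner products of the generators. -/
def wInt {n g : ℕ} (c : Fin g → (Fin n → ZMod 2)) (i k : Fin g) : ℤ :=
  ∑ j, ((c i j).val : ℤ) * ((c k j).val : ℤ)

lemma fiber_sum {n g : ℕ} (c : Fin g → (Fin n → ZMod 2)) (f : (Fin g → ZMod 2) → ℤ) :
    ∑ v : Fin g → ZMod 2, (eTup 2 n g c v : ℤ) * f v = ∑ j : Fin n, f (fun i => c i j) := by
  classical
  rw [← Finset.sum_fiberwise Finset.univ (fun j : Fin n => (fun i => c i j))
      (fun j => f (fun i => c i j))]
  refine Finset.sum_congr rfl fun v _ => ?_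
  have h1 : ∀ j ∈ Finset.univ.filter (fun j : Fin n => (fun i => c i j) = v),
      f (fun i => c i j) = f v := by
    intro j hj
    simp only [Finset.mem_filter] at hj
    rw [hj.2]
  rw [Finset.sum_congr rfl h1, Finset.sum_const, nsmul_eq_mul, eTup]
  congr 3
  apply Finset.filter_congr
  intro j _
  simp [funext_iff]

lemma wInt_cast {n g : ℕ} (c : Fin g → (Fin n → ZMod 2)) (i k : Fin g) :
    ((wInt c i k : ℤ) : ZMod 2) = c i ⬝ᵥ c k := by
  simp [wInt, dotProduct, ZMod.natCast_val, ZMod.cast_id]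

lemma wInt_symm {n g : ℕ} (c : Fin g → (Fin n → ZMod 2)) (i k : Fin g) :
    wInt c i k = wInt c k i := by
  simp [wInt, mul_comm]

lemma quad_sum {n g : ℕ} (c : Fin g → (Fin n → ZMod 2)) (S : Matrix (Fin g) (Fin g) ℤ) :
    ∑ v : Fin g → ZMod 2, (eTup 2 n g c v : ℤ) * quadInt 2 g v S
      = ∑ i, ∑ k, S i k * wInt c i k := by
  rw [fiber_sum]
  unfold quadInt wInt
  rw [Finset.sum_comm]
  refine Finset.sum_congr rfl fun i _ => ?_
  rw [Finset.sum_comm]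
  refine Finset.sum_congr rfl fun k _ => ?_
  rw [Finset.mul_sum]
  exact Finset.sum_congr rfl fun j _ => by ring

lemma diag_sum {n g : ℕ} (c : Fin g → (Fin n → ZMod 2)) (d : Fin g → ℤ) :
    ∑ v : Fin g → ZMod 2, (eTup 2 n g c v : ℤ) * quadInt 2 g v (Matrix.diagonal d)
      = ∑ i, d i * wInt c i i := by
  rw [quad_sum]
  refine Finset.sum_congr rfl fun i _ => ?_
  simp [Matrix.diagonal_apply, ite_mul]

lemma span_orth {m : ℕ} {s : Set (Fin m → ZMod 2)}
    (h : ∀ x ∈ s, ∀ y ∈ s, x ⬝ᵥ y = 0) :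
    ∀ x ∈ Submodule.span (ZMod 2) s, ∀ y ∈ Submodule.span (ZMod 2) s, x ⬝ᵥ y = 0 := by
  intro x hx
  induction hx using Submodule.span_induction with
  | mem x hxs =>
      intro y hy
      induction hy using Submodule.span_induction with
      | mem y hys => exact h _ hxs _ hys
      | zero => simp
      | add y z _ _ hy hz => simp [dotProduct_add, hy, hz]
      | smul a y _ hy => simp [dotProduct_smul, hy]
  | zero => intro y hy; simp
  | add x z _ _ ihx ihz => intro y hy; simp [add_dotProduct, ihx y hy, ihz y hy]
  | smul a x _ ih => intro y hy; simp [smul_dotProduct, ih y hy]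

lemma mul_self_zmod2 : ∀ v : ZMod 2, v * v = v := by decide

lemma sym_sum_even {g : ℕ} (S : Matrix (Fin g) (Fin g) ℤ) (hS : S.IsSymm)
    (hdiag : ∀ i, S i i = 0) (u : Fin g → Fin g → ℤ) (hu : ∀ i k, u i k = u k i) :
    (2:ℤ) ∣ ∑ i, ∑ k, S i k * u i k := by
  rw [show (2:ℤ) = ((2:ℕ):ℤ) by norm_num, ← ZMod.intCast_zmod_eq_zero_iff_dvd]
  push_cast
  rw [← Finset.sum_product']
  refine Finset.sum_involution (fun p _ => (p.2, p.1)) ?_ ?_ (fun p _ => Finset.mem_univ _)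
    (fun p _ => rfl)
  · intro p _
    have h1 : S p.2 p.1 = S p.1 p.2 := hS.apply p.1 p.2
    have h2 : u p.2 p.1 = u p.1 p.2 := hu p.2 p.1
    rw [h1, h2]
    exact CharTwo.add_self_eq_zero _
  · intro p _ hf heq
    have h1 : p.2 = p.1 := congrArg Prod.fst heq
    apply hf
    rw [show p.1 = p.2 from h1.symm, hdiag]
    simp

lemma std_sum {g : ℕ} (i k : Fin g) (w : Fin g → Fin g → ℤ) :
    ∑ a, ∑ b, ((Matrix.single i k (1:ℤ) + Matrix.single k i 1) :
        Matrix (Fin g) (Fin g) ℤ) a b * w a b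
      = w i k + w k i := by
  simp [Matrix.single, Matrix.add_apply, add_mul, ite_mul, ite_and,
    Finset.sum_add_distrib, Finset.sum_ite_eq]

lemma std_symm {g : ℕ} (i k : Fin g) :
    (Matrix.single i k (1:ℤ) + Matrix.single k i 1).IsSymm := by
  ext a b
  simp [Matrix.transpose_apply, Matrix.add_apply, Matrix.single, and_comm]
  ring

lemma std_diag {g : ℕ} (i k : Fin g) (hik : i ≠ k) (a : Fin g) :
    ((Matrix.single i k (1:ℤ) + Matrix.single k i 1) :
        Matrix (Fin g) (Fin g) ℤ) a a = 0 := by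
  simp only [Matrix.add_apply, Matrix.single, Matrix.of_apply]
  rw [if_neg, if_neg, add_zero]
  · rintro ⟨h1, h2⟩; exact hik (h2.trans h1.symm)
  · rintro ⟨h1, h2⟩; exact hik (h1.trans h2.symm)

lemma sum_eTup_eq {n g : ℕ} (c : Fin g → (Fin n → ZMod 2)) :
    ∑ v : Fin g → ZMod 2, (eTup 2 n g c v : ℤ) = (n : ℤ) := by
  have h := fiber_sum c (fun _ => 1)
  simpa using h

/-- The binary code generated by `1_n` and `c^{(1)},…,c^{(g)}` is self-orthogonal iff
the tuple `A(𝔠) = (e_v(𝔠))` is type-I-admissible: `n = Σ_v e_v ≡ 0 mod 2`,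
`Σ_v e_v (v S_d v^T) ≡ 0 mod 2` for all integral diagonal `S_d`, and
`Σ_v e_v (v S_nd v^T) ≡ 0 mod 4` for all integral symmetric `S_nd` with zero diagonal. -/
theorem stmt16 (n g : ℕ) (c : Fin g → (Fin n → ZMod 2)) :
    (∀ x ∈ Submodule.span (ZMod 2)
        (insert (fun _ => 1) (Set.range c) : Set (Fin n → ZMod 2)),
     ∀ y ∈ Submodule.span (ZMod 2)
        (insert (fun _ => 1) (Set.range c) : Set (Fin n → ZMod 2)),
        x ⬝ᵥ y = 0) ↔
      ((2 : ℤ) ∣ ∑ v : Fin g → ZMod 2, (eTup 2 n g c v : ℤ) ∧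
       (∀ d : Fin g → ℤ, (2 : ℤ) ∣ ∑ v : Fin g → ZMod 2,
          (eTup 2 n g c v : ℤ) * quadInt 2 g v (Matrix.diagonal d)) ∧
       (∀ S : Matrix (Fin g) (Fin g) ℤ, S.IsSymm → (∀ i, S i i = 0) →
          (4 : ℤ) ∣ ∑ v : Fin g → ZMod 2,
            (eTup 2 n g c v : ℤ) * quadInt 2 g v S)) := by
  constructor
  · intro h
    have hone : ((fun _ => 1) : Fin n → ZMod 2) ∈ Submodule.span (ZMod 2)
        (insert (fun _ => 1) (Set.range c) : Set (Fin n → ZMod 2)) :=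
      Submodule.subset_span (Set.mem_insert _ _)
    have hci : ∀ i, c i ∈ Submodule.span (ZMod 2)
        (insert (fun _ => 1) (Set.range c) : Set (Fin n → ZMod 2)) :=
      fun i => Submodule.subset_span (Set.mem_insert_of_mem _ ⟨i, rfl⟩)
    have hn : (2:ℕ) ∣ n := by
      have h11 := h _ hone _ hone
      simp only [dotProduct, one_mul, Finset.sum_const, Finset.card_univ,
        Fintype.card_fin, nsmul_eq_mul, mul_one] at h11
      rwa [ZMod.natCast_eq_zero_iff] at h11
    have hw : ∀ i k, (2:ℤ) ∣ wInt c i k := by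
      intro i k
      have hik := h _ (hci i) _ (hci k)
      rw [← wInt_cast] at hik
      rw [ZMod.intCast_zmod_eq_zero_iff_dvd] at hik
      exact_mod_cast hik
    refine ⟨?_, ?_, ?_⟩
    · rw [sum_eTup_eq]
      exact_mod_cast hn
    · intro d
      rw [diag_sum]
      exact Finset.dvd_sum fun i _ => Dvd.dvd.mul_left (hw i i) (d i)
    · intro S hS hdiag
      rw [quad_sum]
      set u : Fin g → Fin g → ℤ := fun i k => wInt c i k / 2 with hudef
      have hw2 : ∀ i k, wInt c i k = 2 * u i k :=
        fun i k => (Int.mul_ediv_cancel' (hw i k)).symm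
      have husym : ∀ i k, u i k = u k i := fun i k => by
        simp only [hudef]
        rw [wInt_symm]
      obtain ⟨V, hV⟩ := sym_sum_even S hS hdiag u husym
      refine ⟨V, ?_⟩
      calc ∑ i, ∑ k, S i k * wInt c i k
          = ∑ i, ∑ k, 2 * (S i k * u i k) := by
            refine Finset.sum_congr rfl fun i _ => Finset.sum_congr rfl fun k _ => ?_
            rw [hw2 i k]; ring
        _ = 2 * ∑ i, ∑ k, S i k * u i k := by
            simp [Finset.mul_sum]
        _ = 4 * V := by rw [hV]; ring
  · rintro ⟨ha, hb, hc2⟩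
    have hn : (2:ℤ) ∣ (n:ℤ) := by rwa [sum_eTup_eq] at ha
    have hwii : ∀ i, (2:ℤ) ∣ wInt c i i := by
      intro i
      have hd := hb (Pi.single i 1)
      rw [diag_sum] at hd
      simpa [Pi.single_apply, ite_mul] using hd
    have hw : ∀ i k, (2:ℤ) ∣ wInt c i k := by
      intro i k
      by_cases hik : i = k
      · subst hik; exact hwii i
      · have hs := hc2 (Matrix.single i k 1 + Matrix.single k i 1)
          (std_symm i k) (std_diag i k hik)
        rw [quad_sum, std_sum, wInt_symm c k i] at hs
        obtain ⟨V, hV⟩ := hs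
        exact ⟨V, by linarith⟩
    have key : ∀ i k, c i ⬝ᵥ c k = 0 := by
      intro i k
      rw [← wInt_cast, ZMod.intCast_zmod_eq_zero_iff_dvd]
      exact_mod_cast hw i k
    have key1 : ∀ i, ((fun _ => 1) : Fin n → ZMod 2) ⬝ᵥ c i = 0 := by
      intro i
      have : ((fun _ => 1) : Fin n → ZMod 2) ⬝ᵥ c i = c i ⬝ᵥ c i := by
        simp [dotProduct, mul_self_zmod2]
      rw [this]; exact key i i
    have key1' : ∀ i, c i ⬝ᵥ ((fun _ => 1) : Fin n → ZMod 2) = 0 := by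
      intro i
      have : c i ⬝ᵥ ((fun _ => 1) : Fin n → ZMod 2) = c i ⬝ᵥ c i := by
        simp [dotProduct, mul_self_zmod2]
      rw [this]; exact key i i
    have key11 : ((fun _ => 1) : Fin n → ZMod 2) ⬝ᵥ (fun _ => 1) = 0 := by
      simp only [dotProduct, one_mul, Finset.sum_const, Finset.card_univ,
        Fintype.card_fin, nsmul_eq_mul, mul_one]
      rw [ZMod.natCast_eq_zero_iff]
      exact_mod_cast hn
    apply span_orth
    intro x hx y hy
    rcases hx with rfl | ⟨i, rfl⟩
    · rcases hy with rfl | ⟨k, rfl⟩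
      · exact key11
      · exact key1 k
    · rcases hy with rfl | ⟨k, rfl⟩
      · exact key1' i
      · exact key i k
end

section
/- Let p be an odd prime, 𝔠 = (c^(1),...,c^(g)) a tuple of vectors in 𝔽_p^n, and 𝔖 the code generated by c^(1),...,c^(g). Then 𝔖 is self-orthogonal with respect to the standard dot product mod p if and only if Σ_{v∈𝔽_p^g} e_v(𝔠) (v S v^T) ≡ 0 mod p for all integral symmetric g×g matrices S, where e_v(𝔠) = |{j : (c_j^(1),...,c_j^(g)) = v}| and all sums use integer representatives {0,...,p−1}. -/
open Matrix

lemma keyA (p n g : ℕ) [NeZero p] (c : Fin g → (Fin n → ZMod p))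
    (S : Matrix (Fin g) (Fin g) ℤ) :
    ((∑ v : Fin g → ZMod p, (eTup p n g c v : ℤ) * quadInt p g v S : ℤ) : ZMod p)
      = ∑ i, ∑ k, (S i k : ZMod p) * (c i ⬝ᵥ c k) := by
  have h1 : (∑ v : Fin g → ZMod p, (eTup p n g c v : ℤ) * quadInt p g v S)
      = ∑ j : Fin n, quadInt p g (fun i => c i j) S := by
    rw [← Finset.sum_fiberwise Finset.univ (fun j : Fin n => (fun i => c i j))
      (fun j => quadInt p g (fun i => c i j) S)]
    refine Finset.sum_congr rfl fun v _ => ?_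
    have : (Finset.univ.filter fun j : Fin n => (fun i => c i j) = v)
        = (Finset.univ.filter fun j : Fin n => ∀ i, c i j = v i) := by
      refine Finset.filter_congr fun j _ => ?_
      simp [funext_iff]
    rw [this]
    rw [Finset.sum_congr rfl (fun j hj => by
      simp only [Finset.mem_filter] at hj
      have : (fun i => c i j) = v := funext hj.2
      rw [this])]
    simp [eTup, mul_comm]
  rw [h1]
  push_cast [quadInt]
  simp only [ZMod.natCast_val, ZMod.cast_id]
  rw [Finset.sum_comm]
  refine Finset.sum_congr rfl fun i _ => ?_
  rw [Finset.sum_comm]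
  refine Finset.sum_congr rfl fun k _ => ?_
  rw [dotProduct, Finset.mul_sum]
  exact Finset.sum_congr rfl fun j _ => by ring

lemma sum_std (p g : ℕ) (i k : Fin g) (f : Fin g → Fin g → ZMod p) :
    (∑ i', ∑ k', (((Matrix.single i k (1:ℤ)) i' k' : ℤ) : ZMod p) * f i' k') = f i k := by
  rw [Finset.sum_eq_single i]
  · rw [Finset.sum_eq_single k]
    · simp [Matrix.single]
    · intro b _ hb; simp [Matrix.single, (Ne.symm hb)]
    · simp
  · intro b _ hb
    apply Finset.sum_eq_zero
    intro k' _
    simp [Matrix.single, (Ne.symm hb)]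
  · simp

/-- For an odd prime `p`, the code generated by `c^{(1)},…,c^{(g)} ∈ 𝔽_p^n` is
self-orthogonal iff `Σ_v e_v(𝔠) (v S v^T) ≡ 0 mod p` for all integral symmetric
`g × g` matrices `S`. -/
theorem stmt17 (p n g : ℕ) [NeZero p] (hp : p.Prime) (hp2 : p ≠ 2)
    (c : Fin g → (Fin n → ZMod p)) :
    (∀ x ∈ Submodule.span (ZMod p) (Set.range c),
     ∀ y ∈ Submodule.span (ZMod p) (Set.range c), x ⬝ᵥ y = 0) ↔
      (∀ S : Matrix (Fin g) (Fin g) ℤ, S.IsSymm →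
        (p : ℤ) ∣ ∑ v : Fin g → ZMod p,
          (eTup p n g c v : ℤ) * quadInt p g v S) := by
  haveI := Fact.mk hp
  constructor
  · intro h S _
    have hpair : ∀ i k, c i ⬝ᵥ c k = 0 := fun i k =>
      h (c i) (Submodule.subset_span ⟨i, rfl⟩) (c k) (Submodule.subset_span ⟨k, rfl⟩)
    rw [← ZMod.intCast_zmod_eq_zero_iff_dvd, keyA]
    simp [hpair]
  · intro h
    have hpair : ∀ i k, c i ⬝ᵥ c k = 0 := by
      intro i k
      have hS : (Matrix.single i k 1 + Matrix.single k i 1 :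
          Matrix (Fin g) (Fin g) ℤ).IsSymm := by
        rw [Matrix.IsSymm]
        ext a b
        simp only [Matrix.transpose_apply, Matrix.add_apply, Matrix.single,
          Matrix.of_apply, and_comm]
        exact add_comm _ _
      have hd := h _ hS
      rw [← ZMod.intCast_zmod_eq_zero_iff_dvd, keyA] at hd
      simp only [Matrix.add_apply, Int.cast_add, add_mul, Finset.sum_add_distrib,
        sum_std] at hd
      rw [dotProduct_comm (c k) (c i)] at hd
      have h2 : (2 : ZMod p) ≠ 0 := by
        intro h0
        have : ((2:ℕ) : ZMod p) = 0 := by exact_mod_cast h0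
        rw [ZMod.natCast_eq_zero_iff] at this
        exact hp2 ((Nat.prime_dvd_prime_iff_eq hp Nat.prime_two).mp this)
      have : (2 : ZMod p) * (c i ⬝ᵥ c k) = 0 := by linear_combination hd
      rcases mul_eq_zero.mp this with h' | h'
      · exact absurd h' h2
      · exact h'
    have H : ∀ x ∈ Submodule.span (ZMod p) (Set.range c), ∀ k, x ⬝ᵥ c k = 0 := by
      intro x hx k
      induction hx using Submodule.span_induction with
      | mem y hy => obtain ⟨i, rfl⟩ := hy; exact hpair i k
      | zero => simp
      | add a b _ _ ha hb => simp [add_dotProduct, ha, hb]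
      | smul r a _ ha => simp [smul_dotProduct, ha]
    intro x hx y hy
    induction hy using Submodule.span_induction with
    | mem y hy => obtain ⟨k, rfl⟩ := hy; exact H x hx k
    | zero => simp
    | add a b _ _ ha hb => simp [dotProduct_add, ha, hb]
    | smul r a _ ha => simp [dotProduct_smul, ha]
end
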